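/- Let X be a Polish space, μ a Borel probability measure on X, {𝒮_n} a decreasing sequence of sub-σ-algebras of the Borel σ-algebra with 𝒮 = ⋂_n 𝒮_n. Let μ = ∫ μ_{n,x} dμ(x) and μ = ∫ μ_{∞,x} dμ(x) be the disintegrations of μ relative to 𝒮_n and 𝒮 respectively. Then for μ-a.e. x ∈ X, the inequality liminf_{n→∞} μ_{n,x}(U) ≥ μ_{∞,x}(U) holds simultaneously for every open subset U of X. -/

import Mathlib

open MeasureTheory Filter TopologicalSpace Set
open scoped ENNReal Topology

/-!
For a Borel set `A`, the conditional expectations `E(1_A | 𝒮_n)` form a reverse martingale. For each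
horizon `N`, the process `k ↦ E(1_A | 𝒮_{N-k})` is a bounded martingale, so Doob's inequality bounds
its expected number of upcrossings uniformly in `N`, and Fatou's lemma shows that a.e. the sequence
`E(1_A | 𝒮_n)(x)` cannot oscillate: it converges. Its limit is `⋂ 𝒮_n`-measurable and has the right
integrals, hence equals `E(1_A | 𝒮)`, i.e. `μ_{n,x}(A) → μ_{∞,x}(A)` a.e. Applying this to the
countably many finite unions of sets of a countable basis and exhausting an open set `U` by an
increasing sequence of such unions gives the inequality for all open sets at once.
-/

section Upcrossings

variable {Ω : Type*} {f : ℕ → Ω → ℝ} {ω : Ω} {a b : ℝ}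

lemma eventually_le_upcrossingsBefore_reverse (hab : a < b) (hfa : ∃ᶠ n in atTop, f n ω < a)
    (hfb : ∃ᶠ n in atTop, b < f n ω) (k : ℕ) :
    ∀ m, ∀ᶠ N in atTop, k ≤ upcrossingsBefore a b (fun j => f (N - j)) (N + 1 - m) ω := by
  induction k with
  | zero => exact fun m => Eventually.of_forall fun N => Nat.zero_le _
  | succ k ih =>
    intro m
    obtain ⟨s, hms, hsb⟩ := frequently_atTop.1 hfb m
    obtain ⟨t, hst, hta⟩ := frequently_atTop.1 hfa (s + 1)
    filter_upwards [ih (t + 1), eventually_ge_atTop (t + 1)] with N hk hN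
    -- in reversed time, `f t < a` at time `N - t` precedes `b < f s` at time `N - s`
    have hup : upcrossingsBefore a b (fun j => f (N - j)) (N - t) ω <
        upcrossingsBefore a b (fun j => f (N - j)) (N - s + 1) ω :=
      upcrossingsBefore_lt_of_exists_upcrossing hab le_rfl
        (by rwa [Nat.sub_sub_self (by omega)]) (by omega) (by rwa [Nat.sub_sub_self (by omega)])
    have hmono : upcrossingsBefore a b (fun j => f (N - j)) (N - s + 1) ω ≤
        upcrossingsBefore a b (fun j => f (N - j)) (N + 1 - m) ω :=
      upcrossingsBefore_mono hab (show N - s + 1 ≤ N + 1 - m by omega) ω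
    rw [show N + 1 - (t + 1) = N - t by omega] at hk
    omega

lemma tendsto_upcrossings_reverse_top (hab : a < b) (hfa : ∃ᶠ n in atTop, f n ω < a)
    (hfb : ∃ᶠ n in atTop, b < f n ω) :
    Tendsto (fun N => upcrossings a b (fun j => f (N - j)) ω) atTop (𝓝 ∞) := by
  refine ENNReal.tendsto_nhds_top fun k => ?_
  filter_upwards [eventually_le_upcrossingsBefore_reverse hab hfa hfb (k + 1) 0] with N hN
  calc (k : ℝ≥0∞) < (k + 1 : ℕ) := by exact_mod_cast k.lt_succ_self
    _ ≤ upcrossingsBefore a b (fun j => f (N - j)) (N + 1 - 0) ω := by exact_mod_cast hN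
    _ ≤ upcrossings a b (fun j => f (N - j)) ω :=
      le_iSup (fun M => (upcrossingsBefore a b (fun j => f (N - j)) M ω : ℝ≥0∞)) _

end Upcrossings

namespace MeasureTheory

variable {Ω : Type*} {m0 : MeasurableSpace Ω} {μ : Measure Ω} {a b R : ℝ}

lemma Submartingale.mul_lintegral_upcrossings_le_of_abs_le [IsFiniteMeasure μ]
    {ℱ : Filtration ℕ m0} {f : ℕ → Ω → ℝ} (hf : Submartingale f ℱ μ)
    (hbdd : ∀ n, ∀ᵐ ω ∂μ, |f n ω| ≤ R) :
    ENNReal.ofReal (b - a) * ∫⁻ ω, upcrossings a b f ω ∂μ ≤ ENNReal.ofReal (R + |a|) * μ univ := by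
  refine (hf.mul_lintegral_upcrossings_le_lintegral_pos_part a b).trans (iSup_le fun n => ?_)
  calc ∫⁻ ω, ENNReal.ofReal (f n ω - a)⁺ ∂μ ≤ ∫⁻ _, ENNReal.ofReal (R + |a|) ∂μ := by
        refine lintegral_mono_ae ((hbdd n).mono fun ω hω => ENNReal.ofReal_le_ofReal ?_)
        exact max_le (by linarith [le_abs_self (f n ω), neg_le_abs a])
          (by linarith [abs_nonneg (f n ω), abs_nonneg a])
    _ = ENNReal.ofReal (R + |a|) * μ univ := lintegral_const _

lemma ae_liminf_upcrossings_lt_top [IsFiniteMeasure μ] {ℱ : ℕ → Filtration ℕ m0}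
    {F : ℕ → ℕ → Ω → ℝ} (hF : ∀ N, Submartingale (F N) (ℱ N) μ) (hab : a < b)
    (hbdd : ∀ N n, ∀ᵐ ω ∂μ, |F N n ω| ≤ R) :
    ∀ᵐ ω ∂μ, liminf (fun N => upcrossings a b (F N) ω) atTop < ∞ := by
  have hmeas N : Measurable (upcrossings a b (F N)) :=
    (hF N).stronglyAdapted.measurable_upcrossings hab
  have hba : ENNReal.ofReal (b - a) ≠ 0 := by simpa using hab
  set C := ENNReal.ofReal (R + |a|) * μ univ / ENNReal.ofReal (b - a)
  have hC N : ∫⁻ ω, upcrossings a b (F N) ω ∂μ ≤ C := by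
    rw [ENNReal.le_div_iff_mul_le (Or.inl hba) (Or.inl ENNReal.ofReal_ne_top), mul_comm]
    exact (hF N).mul_lintegral_upcrossings_le_of_abs_le (hbdd N)
  have hfatou : ∫⁻ ω, liminf (fun N => upcrossings a b (F N) ω) atTop ∂μ ≤ C :=
    (lintegral_liminf_le hmeas).trans
      ((liminf_le_liminf (Eventually.of_forall hC)).trans_eq (liminf_const C))
  exact ae_lt_top (Measurable.liminf hmeas)
    (ne_top_of_le_ne_top (ENNReal.div_lt_top (by finiteness) hba).ne hfatou)

variable {𝒮 : ℕ → MeasurableSpace Ω}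

def reverseFiltration (hle : ∀ n, 𝒮 n ≤ m0) (hanti : Antitone 𝒮) (N : ℕ) : Filtration ℕ m0 where
  seq k := 𝒮 (N - k)
  mono' _ _ hkl := hanti (Nat.sub_le_sub_left hkl N)
  le' _ := hle _

lemma ae_exists_tendsto_condExp_of_antitone [IsFiniteMeasure μ] (hle : ∀ n, 𝒮 n ≤ m0)
    (hanti : Antitone 𝒮) {g : Ω → ℝ} (hbdd : ∀ᵐ ω ∂μ, |g ω| ≤ R) :
    ∀ᵐ ω ∂μ, ∃ c, Tendsto (fun n => μ[g|𝒮 n] ω) atTop (𝓝 c) := by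
  have hbdd' n : ∀ᵐ ω ∂μ, |μ[g|𝒮 n] ω| ≤ R := ae_bdd_abs_condExp_of_ae_bdd_abs hbdd
  have hup : ∀ᵐ ω ∂μ, ∀ q r : ℚ, q < r →
      liminf (fun N => upcrossings q r (fun j => μ[g|𝒮 (N - j)]) ω) atTop < ∞ := by
    simp only [ae_all_iff, eventually_imp_distrib_left]
    intro q r hqr
    exact ae_liminf_upcrossings_lt_top
      (fun N => (martingale_condExp g (reverseFiltration hle hanti N) μ).submartingale)
      (by exact_mod_cast hqr) fun N n => hbdd' (N - n)
  filter_upwards [hup, ae_all_iff.2 hbdd'] with ω hω hR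
  refine tendsto_of_no_upcrossings Rat.denseRange_cast ?_
    (isBoundedUnder_of ⟨R, fun n => (abs_le.1 (hR n)).2⟩)
    (isBoundedUnder_of ⟨-R, fun n => (abs_le.1 (hR n)).1⟩)
  rintro _ ⟨q, rfl⟩ _ ⟨r, rfl⟩ hqr ⟨hfq, hfr⟩
  exact (hω q r (by exact_mod_cast hqr)).ne (tendsto_upcrossings_reverse_top hqr hfq hfr).liminf_eq

lemma measurable_liminf_of_antitone (hanti : Antitone 𝒮) {f : ℕ → Ω → ℝ}
    (hf : ∀ n, Measurable[𝒮 n] (f n)) :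
    Measurable[⨅ n, 𝒮 n] fun ω => liminf (fun n => f n ω) atTop := by
  intro s hs
  refine MeasurableSpace.measurableSet_iInf.2 fun m => ?_
  have hshift : (fun ω => liminf (fun n => f n ω) atTop) =
      fun ω => liminf (fun n => f (n + m) ω) atTop :=
    funext fun ω => (liminf_nat_add (fun n => f n ω) m).symm
  rw [hshift]
  exact Measurable.liminf (fun n => (hf (n + m)).mono (hanti (Nat.le_add_left m n)) le_rfl) hs

/-- **Lévy's downward theorem** for bounded functions. -/
theorem tendsto_ae_condExp_iInf [IsFiniteMeasure μ] (hle : ∀ n, 𝒮 n ≤ m0) (hanti : Antitone 𝒮)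
    {g : Ω → ℝ} (hg : Integrable g μ) (hbdd : ∀ᵐ ω ∂μ, |g ω| ≤ R) :
    ∀ᵐ ω ∂μ, Tendsto (fun n => μ[g|𝒮 n] ω) atTop (𝓝 (μ[g|⨅ n, 𝒮 n] ω)) := by
  have hbdd' n : ∀ᵐ ω ∂μ, |μ[g|𝒮 n] ω| ≤ R := ae_bdd_abs_condExp_of_ae_bdd_abs hbdd
  set L := fun ω => liminf (fun n => μ[g|𝒮 n] ω) atTop
  have hL : ∀ᵐ ω ∂μ, Tendsto (fun n => μ[g|𝒮 n] ω) atTop (𝓝 (L ω)) := by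
    filter_upwards [ae_exists_tendsto_condExp_of_antitone hle hanti hbdd] with ω ⟨c, hc⟩
    rwa [show L ω = c from hc.liminf_eq]
  have hL_meas : StronglyMeasurable[⨅ n, 𝒮 n] L :=
    (measurable_liminf_of_antitone hanti fun _ => stronglyMeasurable_condExp.measurable)
      |>.stronglyMeasurable
  have hiInf_le : ⨅ n, 𝒮 n ≤ m0 := iInf_le_of_le 0 (hle 0)
  have hL_int : Integrable L μ := by
    refine (integrable_const R).mono' (hL_meas.mono hiInf_le).aestronglyMeasurable ?_
    filter_upwards [hL, ae_all_iff.2 hbdd'] with ω hω hR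
    exact le_of_tendsto' ((continuous_abs.tendsto _).comp hω) hR
  -- by the tower property, `μ[μ[g|𝒮 n]|⨅ n, 𝒮 n] = μ[g|⨅ n, 𝒮 n]`; let `n → ∞` on the left
  have hcond : μ[L|⨅ n, 𝒮 n] =ᵐ[μ] μ[g|⨅ n, 𝒮 n] :=
    tendsto_condExp_unique (fun n => μ[g|𝒮 n]) (fun _ => g) L g (fun _ => integrable_condExp)
      (fun _ => hg) hL (ae_of_all _ fun _ => tendsto_const_nhds) (fun _ => R) (integrable_const R)
      (fun _ => R) (integrable_const R) hbdd' (fun _ => hbdd)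
      (fun n => condExp_condExp_of_le (iInf_le 𝒮 n) (hle n))
  rw [condExp_of_stronglyMeasurable hiInf_le hL_meas hL_int] at hcond
  filter_upwards [hL, hcond] with ω hω hω'
  rwa [← hω']

end MeasureTheory

lemma ENNReal.le_liminf_of_tendsto_toReal {u : ℕ → ℝ≥0∞} {c : ℝ≥0∞} (hc : c ≠ ∞)
    (h : Tendsto (fun n => (u n).toReal) atTop (𝓝 c.toReal)) : c ≤ liminf u atTop :=
  calc c = liminf (fun n => ENNReal.ofReal (u n).toReal) atTop := by
        have hlim := ((ENNReal.continuous_ofReal.tendsto _).comp h).liminf_eq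
        rw [ENNReal.ofReal_toReal hc] at hlim
        exact hlim.symm
    _ ≤ liminf u atTop := liminf_le_liminf (Eventually.of_forall fun _ => ENNReal.ofReal_toReal_le)

lemma TopologicalSpace.IsTopologicalBasis.le_liminf_measure_of_isOpen {X ι : Type*}
    [TopologicalSpace X] [MeasurableSpace X] {B : Set (Set X)} (hB : IsTopologicalBasis B)
    (hBc : B.Countable) {ν : Measure X} {ρ : ι → Measure X} {l : Filter ι}
    (h : ∀ t ⊆ B, t.Finite → ν (⋃₀ t) ≤ liminf (fun i => ρ i (⋃₀ t)) l)
    {U : Set X} (hU : IsOpen U) : ν U ≤ liminf (fun i => ρ i U) l := by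
  set C := {s | s ∈ B ∧ s ⊆ U}
  have hCU : U = ⋃₀ C := hB.open_eq_sUnion' hU
  rcases C.eq_empty_or_nonempty with hC | hC
  · simp [hCU, hC]
  obtain ⟨e, he⟩ := (hBc.mono fun _ hs => hs.1).exists_eq_range hC
  have heC i : e i ∈ C := he ▸ mem_range_self i
  have hU_eq : ν U = ⨆ n, ν (accumulate e n) := by
    rw [← measure_iUnion_eq_iSup_accumulate, ← sUnion_range, ← he, ← hCU]
  rw [hU_eq]
  refine iSup_le fun n => ?_
  have hacc : accumulate e n = ⋃₀ (e '' Iic n) := by simp [accumulate_def, sUnion_image]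
  rw [hacc]
  refine (h _ (image_subset_iff.2 fun i _ => (heC i).1) ((finite_Iic n).image e)).trans
    (liminf_le_liminf (Eventually.of_forall fun i => measure_mono ?_))
  exact sUnion_subset (forall_mem_image.2 fun i _ => (heC i).2)

theorem liminf_condMeasure_open_ge_general {X : Type*} [MetricSpace X] [PolishSpace X]
    [mX : MeasurableSpace X] [BorelSpace X]
    (μ : Measure X) [IsProbabilityMeasure μ]
    (𝒮 : ℕ → MeasurableSpace X) (hle : ∀ n, 𝒮 n ≤ mX) (hanti : Antitone 𝒮)
    (μn : ℕ → X → Measure X) (μinf : X → Measure X)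
    (hprobinf : ∀ᵐ x ∂μ, IsProbabilityMeasure (μinf x))
    (hdisn : ∀ (n : ℕ) (A : Set X), MeasurableSet A →
      (fun x => ((μn n x) A).toReal) =ᵐ[μ] μ[Set.indicator A (fun _ => (1:ℝ))|𝒮 n])
    (hdisinf : ∀ (A : Set X), MeasurableSet A →
      (fun x => (μinf x A).toReal) =ᵐ[μ] μ[Set.indicator A (fun _ => (1:ℝ))|⨅ n, 𝒮 n]) :
    ∀ᵐ x ∂μ, ∀ U : Set X, IsOpen U →
      μinf x U ≤ Filter.liminf (fun n => μn n x U) atTop := by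
  have hset (A : Set X) (hA : MeasurableSet A) :
      ∀ᵐ x ∂μ, μinf x A ≤ liminf (fun n => μn n x A) atTop := by
    have hbdd : ∀ᵐ x ∂μ, |A.indicator (fun _ => (1:ℝ)) x| ≤ 1 :=
      ae_of_all _ fun x => by by_cases hx : x ∈ A <;> simp [hx]
    filter_upwards [tendsto_ae_condExp_iInf hle hanti ((integrable_const 1).indicator hA) hbdd,
      ae_all_iff.2 fun n => hdisn n A hA, hdisinf A hA, hprobinf] with x hlim hn hinf hprob
    refine ENNReal.le_liminf_of_tendsto_toReal (measure_ne_top _ _) ?_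
    simpa only [hn, hinf] using hlim
  have hB := countable_countableBasis X
  filter_upwards [(ae_ball_iff (countable_ofPred_finite_subset hB)).2 fun t ht =>
    hset _ (isOpen_sUnion fun s hs => isOpen_of_mem_countableBasis (ht.2 hs)).measurableSet]
    with x hx U hU
  exact (isBasis_countableBasis X).le_liminf_measure_of_isOpen hB
    (fun t htB htf => hx t ⟨htf, htB⟩) hU

theorem liminf_condMeasure_open_ge {X : Type*} [MetricSpace X] [PolishSpace X]
    [mX : MeasurableSpace X] [BorelSpace X]
    (μ : Measure X) [IsProbabilityMeasure μ]
    (𝒮 : ℕ → MeasurableSpace X) (hle : ∀ n, 𝒮 n ≤ mX) (hanti : Antitone 𝒮)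
    (μn : ℕ → X → Measure X) (μinf : X → Measure X)
    (hprobn : ∀ n, ∀ᵐ x ∂μ, IsProbabilityMeasure (μn n x))
    (hprobinf : ∀ᵐ x ∂μ, IsProbabilityMeasure (μinf x))
    (hdisn : ∀ (n : ℕ) (A : Set X), MeasurableSet A →
      (fun x => ((μn n x) A).toReal) =ᵐ[μ] μ[Set.indicator A (fun _ => (1:ℝ))|𝒮 n])
    (hdisinf : ∀ (A : Set X), MeasurableSet A →
      (fun x => (μinf x A).toReal) =ᵐ[μ] μ[Set.indicator A (fun _ => (1:ℝ))|⨅ n, 𝒮 n]) :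
    ∀ᵐ x ∂μ, ∀ U : Set X, IsOpen U →
      μinf x U ≤ Filter.liminf (fun n => μn n x U) atTop :=
  liminf_condMeasure_open_ge_general (mX := mX) μ 𝒮 hle hanti μn μinf hprobinf hdisn hdisinf
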